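/- Let G be a Carnot group with homogeneous semi-metric d (left-invariant, homogeneous under dilations, with quasi-triangle constant C₀), homogeneous dimension Q, and ν = ν_v the backwards projection along a fixed horizontal direction v onto the orthogonal hyperplane G⊥_v. Then there exists a constant c₁ > 0, depending only on v, G, and d, such that ℒ^{n−1}(ν(B(g,r))) = c₁ r^{Q−1} for every g ∈ G and r > 0. -/

import Mathlib

open MeasureTheory Set

/-
Left translation by `g` descends along `ν` to a map `T_g` of the hyperplane with
`ν(g h) = T_g (ν h)`. Since the group law is triangular, so is `T_g`, and triangular maps preserve
Lebesgue measure. The dilations commute with `ν` and act on the hyperplane diagonally with weights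
`w 1, …, w n`, which add up to `Q - 1`. Hence `ν(B(g, r)) = T_g (δ_r (ν(B(0, 1))))` has measure
`r ^ (Q - 1) · ℒ(ν(B(0, 1)))`, and this constant is positive and finite because `ν(B(0, 1))` is
open, nonempty and relatively compact.
-/

/-- The backwards projection along the horizontal line `g · exp(ℝ·e₀)` (first
coordinate direction) onto the hyperplane `{x | x 0 = 0}`, written in the
coordinates `1, …, n` of that hyperplane. -/
noncomputable def nuProj (n : ℕ)
    (mul : (Fin (n+1) → ℝ) → (Fin (n+1) → ℝ) → (Fin (n+1) → ℝ))
    (g : Fin (n+1) → ℝ) : Fin n → ℝ :=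
  fun i => mul g (fun j => if j = 0 then -(g 0) else 0) i.succ

theorem measurePreserving_of_sub_triangular {n : ℕ} (f : (Fin n → ℝ) → Fin n → ℝ)
    (hf : Measurable f)
    (htri : ∀ i x y, (∀ j < i, x j = y j) → f x i - x i = f y i - y i) :
    MeasurePreserving f volume volume := by
  induction n with
  | zero => simpa [Subsingleton.elim f id] using MeasurePreserving.id volume
  | succ n ih =>
    -- `f` is a skew product over `t ↦ t + f 0 0` whose fibre maps are triangular on `ℝⁿ`.
    set e := MeasurableEquiv.piFinSuccAbove (fun _ : Fin (n + 1) => ℝ) 0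
    have he : ∀ p : ℝ × (Fin n → ℝ), e.symm p = Fin.cons p.1 p.2 := fun _ => by
      simp [e]; rfl
    set F : ℝ → (Fin n → ℝ) → Fin n → ℝ := fun t y i => f (Fin.cons t y) i.succ
    have hFm : Measurable (Function.uncurry F) := by
      have : Measurable fun p : ℝ × (Fin n → ℝ) => f (Fin.cons p.1 p.2) :=
        hf.comp (funext he ▸ e.symm.measurable)
      exact measurable_pi_lambda _ fun i => (measurable_pi_apply _).comp this
    have hF : ∀ t, MeasurePreserving (F t) volume volume := fun t =>
      ih (F t) (hFm.comp measurable_prodMk_left) fun i x y hxy => by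
        simpa [F] using htri i.succ (Fin.cons t x) (Fin.cons t y) fun j hj => by
          cases j using Fin.cases with
          | zero => rfl
          | succ j => simpa using hxy j (Fin.succ_lt_succ_iff.mp hj)
    have hskew : MeasurePreserving (fun p : ℝ × (Fin n → ℝ) => (p.1 + f 0 0, F p.1 p.2))
        (volume.prod volume) (volume.prod volume) :=
      (measurePreserving_add_right volume (f 0 0)).skew_product hFm
        (ae_of_all _ fun t => (hF t).map_eq)
    have hfe :
        f = e.symm ∘ (fun p : ℝ × (Fin n → ℝ) => (p.1 + f 0 0, F p.1 p.2)) ∘ e := by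
      funext x i
      cases i using Fin.cases with
      | zero =>
        have := htri 0 x 0 (by simp)
        simp only [Pi.zero_apply, sub_zero] at this
        simp [e]; linarith
      | succ i => simp [e, F]
    rw [hfe]
    exact (volume_preserving_piFinSuccAbove (fun _ => ℝ) 0).symm.comp
      (hskew.comp (volume_preserving_piFinSuccAbove (fun _ => ℝ) 0))

theorem volume_image_mul_diagonal {ι : Type*} [Fintype ι] [DecidableEq ι] (c : ι → ℝ)
    (s : Set (ι → ℝ)) :
    volume ((fun x i => c i * x i) '' s) = ENNReal.ofReal |∏ i, c i| * volume s := by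
  have : (fun (x : ι → ℝ) i => c i * x i) = Matrix.toLin' (Matrix.diagonal c) := by
    ext x i; simp [Matrix.mulVec_diagonal]
  rw [this, Measure.addHaar_image_linearMap, LinearMap.det_toLin', Matrix.det_diagonal]

def horizExp (n : ℕ) (t : ℝ) : Fin (n+1) → ℝ := fun j => if j = 0 then t else 0

noncomputable def nuTransl (n : ℕ)
    (mul : (Fin (n+1) → ℝ) → (Fin (n+1) → ℝ) → (Fin (n+1) → ℝ))
    (g : Fin (n+1) → ℝ) (x : Fin n → ℝ) : Fin n → ℝ :=
  nuProj n mul (mul g (Fin.cons 0 x))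

section
variable {n : ℕ} {mul : (Fin (n+1) → ℝ) → (Fin (n+1) → ℝ) → (Fin (n+1) → ℝ)}

lemma nuProj_eq_horizExp (h : Fin (n+1) → ℝ) :
    nuProj n mul h = fun i => mul h (horizExp n (-h 0)) i.succ := rfl

lemma horizExp_zero : horizExp n 0 = 0 := by
  funext j; simp [horizExp]

lemma nuProj_mul_horizExp (hassoc : ∀ x y z, mul (mul x y) z = mul x (mul y z))
    (h0 : ∀ x y, mul x y 0 = x 0 + y 0)
    (hline : ∀ s t : ℝ, mul (horizExp n s) (horizExp n t) = horizExp n (s + t))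
    (h : Fin (n+1) → ℝ) (t : ℝ) :
    nuProj n mul (mul h (horizExp n t)) = nuProj n mul h := by
  have : mul h (horizExp n t) 0 = h 0 + t := by simp [h0, horizExp]
  rw [nuProj_eq_horizExp, nuProj_eq_horizExp, this, hassoc, hline,
    show t + -(h 0 + t) = -h 0 by ring]

lemma cons_zero_nuProj (h0 : ∀ x y, mul x y 0 = x 0 + y 0) (h : Fin (n+1) → ℝ) :
    Fin.cons 0 (nuProj n mul h) = mul h (horizExp n (-h 0)) := by
  funext j
  cases j using Fin.cases with
  | zero => simp [h0, horizExp]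
  | succ j => rfl

lemma nuProj_cons_zero (hid : ∀ x, mul x 0 = x) (x : Fin n → ℝ) :
    nuProj n mul (Fin.cons 0 x) = x := by
  rw [nuProj_eq_horizExp, Fin.cons_zero, neg_zero, horizExp_zero, hid]
  rfl

lemma nuProj_mul (hassoc : ∀ x y z, mul (mul x y) z = mul x (mul y z))
    (h0 : ∀ x y, mul x y 0 = x 0 + y 0)
    (hline : ∀ s t : ℝ, mul (horizExp n s) (horizExp n t) = horizExp n (s + t))
    (g h : Fin (n+1) → ℝ) :
    nuProj n mul (mul g h) = nuTransl n mul g (nuProj n mul h) := by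
  rw [nuTransl, cons_zero_nuProj h0, ← hassoc, nuProj_mul_horizExp hassoc h0 hline]

lemma nuTransl_nuTransl (hassoc : ∀ x y z, mul (mul x y) z = mul x (mul y z))
    (h0 : ∀ x y, mul x y 0 = x 0 + y 0)
    (hline : ∀ s t : ℝ, mul (horizExp n s) (horizExp n t) = horizExp n (s + t))
    (g g' : Fin (n+1) → ℝ) (x : Fin n → ℝ) :
    nuTransl n mul g (nuTransl n mul g' x) = nuTransl n mul (mul g g') x := by
  change nuTransl n mul g (nuProj n mul (mul g' (Fin.cons 0 x))) = _
  rw [← nuProj_mul hassoc h0 hline, ← hassoc, nuTransl]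

lemma nuTransl_zero (hid : ∀ x, mul 0 x = x ∧ mul x 0 = x) (x : Fin n → ℝ) :
    nuTransl n mul 0 x = x := by
  rw [nuTransl, (hid _).1, nuProj_cons_zero fun x => (hid x).2]

lemma mul_eq_of_forall_lt (htri : ∀ (i : Fin (n+1)) (x x' y y' : Fin (n+1) → ℝ),
      (∀ j, j < i → x j = y j) → (∀ j, j < i → x' j = y' j) →
      mul x x' i - x i - x' i = mul y y' i - y i - y' i)
    {i : Fin (n+1)} {x x' y y' : Fin (n+1) → ℝ}
    (hx : ∀ j < i, x j = y j) (hx' : ∀ j < i, x' j = y' j) :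
    ∀ j < i, mul x x' j = mul y y' j := fun j hj => by
  have := htri j x x' y y' (fun k hk => hx k (hk.trans hj)) (fun k hk => hx' k (hk.trans hj))
  linarith [hx j hj, hx' j hj]

lemma nuTransl_sub_eq_of_forall_lt (htri : ∀ (i : Fin (n+1)) (x x' y y' : Fin (n+1) → ℝ),
      (∀ j, j < i → x j = y j) → (∀ j, j < i → x' j = y' j) →
      mul x x' i - x i - x' i = mul y y' i - y i - y' i)
    (h0 : ∀ x y, mul x y 0 = x 0 + y 0) (g : Fin (n+1) → ℝ) (i : Fin n) (x y : Fin n → ℝ)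
    (hxy : ∀ j < i, x j = y j) :
    nuTransl n mul g x i - x i = nuTransl n mul g y i - y i := by
  have hcons : ∀ j < i.succ,
      (Fin.cons 0 x : Fin (n+1) → ℝ) j = (Fin.cons 0 y : Fin (n+1) → ℝ) j := by
    intro j hj
    cases j using Fin.cases with
    | zero => rfl
    | succ j => exact hxy j (Fin.succ_lt_succ_iff.mp hj)
  have hg : ∀ z : Fin n → ℝ, nuTransl n mul g z i
      = mul (mul g (Fin.cons 0 z)) (horizExp n (-g 0)) i.succ := fun z => by
    simp [nuTransl, nuProj_eq_horizExp, h0]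
  have hcoord : ∀ z : Fin n → ℝ, (Fin.cons 0 z : Fin (n+1) → ℝ) i.succ = z i :=
    fun _ => rfl
  -- Triangularity of both products: first `g · (0, x)`, then its product with `exp(-g₀ e₀)`.
  have h₁ := htri i.succ _ _ _ _
    (mul_eq_of_forall_lt htri (x := g) (y := g) (fun _ _ => rfl) hcons)
    (fun _ _ => rfl : ∀ j < i.succ, horizExp n (-g 0) j = horizExp n (-g 0) j)
  have h₂ := htri i.succ g _ g _ (fun _ _ => rfl) hcons
  rw [hcoord, hcoord] at h₂
  rw [hg, hg]
  linarith

lemma continuous_horizExp : Continuous (horizExp n) :=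
  continuous_pi fun j => by
    by_cases hj : j = 0 <;> simp only [horizExp, hj, if_true, if_false] <;> fun_prop

lemma continuous_nuProj (hcont : Continuous (Function.uncurry mul)) :
    Continuous (nuProj n mul) :=
  continuous_pi fun i => (continuous_apply i.succ).comp <|
    hcont.comp (continuous_id.prodMk (continuous_horizExp.comp (continuous_apply 0).neg))

lemma continuous_nuTransl (hcont : Continuous (Function.uncurry mul)) (g : Fin (n+1) → ℝ) :
    Continuous (nuTransl n mul g) :=
  (continuous_nuProj hcont).comp <| hcont.comp <|
    continuous_const.prodMk <| continuous_const.finCons continuous_id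

lemma volume_image_nuTransl (hassoc : ∀ x y z, mul (mul x y) z = mul x (mul y z))
    (hid : ∀ x, mul 0 x = x ∧ mul x 0 = x)
    {inv : (Fin (n+1) → ℝ) → (Fin (n+1) → ℝ)}
    (hinv : ∀ x, mul x (inv x) = 0 ∧ mul (inv x) x = 0)
    (htri : ∀ (i : Fin (n+1)) (x x' y y' : Fin (n+1) → ℝ),
      (∀ j, j < i → x j = y j) → (∀ j, j < i → x' j = y' j) →
      mul x x' i - x i - x' i = mul y y' i - y i - y' i)
    (h0 : ∀ x y, mul x y 0 = x 0 + y 0)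
    (hline : ∀ s t : ℝ, mul (horizExp n s) (horizExp n t) = horizExp n (s + t))
    (hcont : Continuous (Function.uncurry mul)) (g : Fin (n+1) → ℝ) (s : Set (Fin n → ℝ)) :
    volume (nuTransl n mul g '' s) = volume s := by
  have hcancel : ∀ a b, mul a b = 0 → ∀ x, nuTransl n mul a (nuTransl n mul b x) = x := by
    intro a b hab x
    rw [nuTransl_nuTransl hassoc h0 hline, hab, nuTransl_zero hid]
  let e : (Fin n → ℝ) ≃ᵐ (Fin n → ℝ) :=
    { toFun := nuTransl n mul (inv g)
      invFun := nuTransl n mul g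
      left_inv := hcancel _ _ (hinv g).1
      right_inv := hcancel _ _ (hinv g).2
      measurable_toFun := (continuous_nuTransl hcont _).measurable
      measurable_invFun := (continuous_nuTransl hcont _).measurable }
  have he : MeasurePreserving e volume volume :=
    measurePreserving_of_sub_triangular _ e.measurable
      (nuTransl_sub_eq_of_forall_lt htri h0 (inv g))
  rw [← he.measure_preimage_equiv s, ← e.image_symm]
  rfl

lemma nuProj_dilation {w : Fin (n+1) → ℕ} (hw0 : w 0 = 1)
    (hδmul : ∀ (l : ℝ) (x y : Fin (n+1) → ℝ), 0 < l →
      mul (fun i => l ^ (w i) * x i) (fun i => l ^ (w i) * y i)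
        = fun i => l ^ (w i) * mul x y i)
    {l : ℝ} (hl : 0 < l) (h : Fin (n+1) → ℝ) :
    nuProj n mul (fun i => l ^ w i * h i) = fun i => l ^ w i.succ * nuProj n mul h i := by
  have : horizExp n (-(l ^ w 0 * h 0)) = fun i => l ^ w i * horizExp n (-h 0) i := by
    funext j
    by_cases hj : j = 0 <;> simp [horizExp, hj, hw0]
  rw [nuProj_eq_horizExp, nuProj_eq_horizExp, this, hδmul l _ _ hl]

lemma isOpen_image_nuProj (hassoc : ∀ x y z, mul (mul x y) z = mul x (mul y z))
    (hid : ∀ x, mul x 0 = x) (h0 : ∀ x y, mul x y 0 = x 0 + y 0)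
    (hline : ∀ s t : ℝ, mul (horizExp n s) (horizExp n t) = horizExp n (s + t))
    (hcont : Continuous (Function.uncurry mul)) {U : Set (Fin (n+1) → ℝ)} (hU : IsOpen U) :
    IsOpen (nuProj n mul '' U) := by
  have : nuProj n mul '' U = ⋃ t, (fun x => mul (Fin.cons 0 x) (horizExp n t)) ⁻¹' U := by
    ext x
    simp only [mem_image, mem_iUnion, mem_preimage]
    constructor
    · rintro ⟨h, hh, rfl⟩
      refine ⟨h 0, ?_⟩
      rwa [cons_zero_nuProj h0, hassoc, hline, neg_add_cancel, horizExp_zero, hid]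
    · rintro ⟨t, ht⟩
      exact ⟨_, ht, by rw [nuProj_mul_horizExp hassoc h0 hline, nuProj_cons_zero hid]⟩
  rw [this]
  exact isOpen_iUnion fun t => hU.preimage <|
    hcont.comp ((continuous_const.finCons continuous_id).prodMk continuous_const)

lemma setOf_inv_mul_lt_eq_image (hassoc : ∀ x y z, mul (mul x y) z = mul x (mul y z))
    (hid : ∀ x, mul 0 x = x)
    {inv : (Fin (n+1) → ℝ) → (Fin (n+1) → ℝ)}
    (hinv : ∀ x, mul x (inv x) = 0 ∧ mul (inv x) x = 0)
    (Nm : (Fin (n+1) → ℝ) → ℝ) (g : Fin (n+1) → ℝ) (r : ℝ) :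
    {h | Nm (mul (inv g) h) < r} = mul g '' {h | Nm h < r} := by
  ext h
  constructor
  · intro hh
    exact ⟨mul (inv g) h, hh, by rw [← hassoc, (hinv g).1, hid]⟩
  · rintro ⟨h', hh', rfl⟩
    rwa [mem_ofPred_eq, ← hassoc, (hinv g).2, hid]

end

lemma setOf_lt_eq_image_dilation {ι : Type*} {Nm : (ι → ℝ) → ℝ} {w : ι → ℕ}
    (hNδ : ∀ (l : ℝ) (x : ι → ℝ), 0 < l → Nm (fun i => l ^ (w i) * x i) = l * Nm x)
    {r : ℝ} (hr : 0 < r) :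
    {h | Nm h < r} = (fun h i => r ^ w i * h i) '' {h | Nm h < 1} := by
  ext h
  constructor
  · intro hh
    refine ⟨fun i => r⁻¹ ^ w i * h i, ?_, ?_⟩
    · rw [mem_ofPred_eq, hNδ _ _ (inv_pos.mpr hr), inv_mul_lt_one₀ hr]
      exact hh
    · funext i
      dsimp only
      rw [← mul_assoc, ← mul_pow, mul_inv_cancel₀ hr.ne', one_pow, one_mul]
  · rintro ⟨h', hh', rfl⟩
    rw [mem_ofPred_eq, hNδ _ _ hr]
    exact mul_lt_of_lt_one_right hr hh'

theorem stmt13_general (n : ℕ)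
    (mul : (Fin (n+1) → ℝ) → (Fin (n+1) → ℝ) → (Fin (n+1) → ℝ))
    (inv : (Fin (n+1) → ℝ) → (Fin (n+1) → ℝ))
    (hassoc : ∀ x y z, mul (mul x y) z = mul x (mul y z))
    (hid : ∀ x, mul 0 x = x ∧ mul x 0 = x)
    (hinv : ∀ x, mul x (inv x) = 0 ∧ mul (inv x) x = 0)
    (htri : ∀ (i : Fin (n+1)) (x x' y y' : Fin (n+1) → ℝ),
      (∀ j, j < i → x j = y j) → (∀ j, j < i → x' j = y' j) →
      mul x x' i - x i - x' i = mul y y' i - y i - y' i)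
    (h0 : ∀ x y, mul x y 0 = x 0 + y 0)
    (hcont : Continuous fun p : (Fin (n+1) → ℝ) × (Fin (n+1) → ℝ) => mul p.1 p.2)
    (hline : ∀ s t : ℝ,
      mul (fun j => if j = 0 then s else 0) (fun j => if j = 0 then t else 0)
        = fun j => if j = 0 then s + t else 0)
    (w : Fin (n+1) → ℕ) (hw0 : w 0 = 1)
    (Nm : (Fin (n+1) → ℝ) → ℝ)
    (hNc : Continuous Nm)
    (hNδ : ∀ (l : ℝ) (x : Fin (n+1) → ℝ), 0 < l →
      Nm (fun i => l ^ (w i) * x i) = l * Nm x)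
    (hδmul : ∀ (l : ℝ) (x y : Fin (n+1) → ℝ), 0 < l →
      mul (fun i => l ^ (w i) * x i) (fun i => l ^ (w i) * y i)
        = fun i => l ^ (w i) * mul x y i)
    (hcompact : IsCompact {x : Fin (n+1) → ℝ | Nm x ≤ 1}) :
    ∃ c₁ > 0, ∀ (g : Fin (n+1) → ℝ) (r : ℝ), 0 < r →
      volume (nuProj n mul '' {h | Nm (mul (inv g) h) < r})
        = ENNReal.ofReal (c₁ * r ^ ((∑ i, w i) - 1)) := by
  set S := nuProj n mul '' {h | Nm h < 1}
  have hNm0 : Nm 0 = 0 := by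
    have := hNδ 2 0 two_pos
    simp only [Pi.zero_apply, mul_zero, ← Pi.zero_def] at this
    linarith
  have hS_pos : 0 < volume S :=
    (isOpen_image_nuProj hassoc (fun x => (hid x).2) h0 hline hcont
      (isOpen_lt hNc continuous_const)).measure_pos volume ⟨_, 0, by simp [hNm0], rfl⟩
  have hS_fin : volume S < ⊤ :=
    (measure_mono (image_mono fun h (hh : Nm h < 1) => hh.le)).trans_lt
      (hcompact.image (continuous_nuProj hcont)).measure_lt_top
  refine ⟨(volume S).toReal, ENNReal.toReal_pos hS_pos.ne' hS_fin.ne, fun g r hr => ?_⟩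
  have hball : nuProj n mul '' {h | Nm (mul (inv g) h) < r}
      = nuTransl n mul g '' ((fun x i => r ^ w i.succ * x i) '' S) := by
    rw [setOf_inv_mul_lt_eq_image hassoc (fun x => (hid x).1) hinv,
      setOf_lt_eq_image_dilation hNδ hr]
    simp only [S, image_image]
    exact image_congr fun h _ => by
      rw [nuProj_mul hassoc h0 hline, nuProj_dilation hw0 hδmul hr]
  have hdet : ∏ i : Fin n, r ^ w i.succ = r ^ ((∑ i, w i) - 1) := by
    rw [Finset.prod_pow_eq_pow_sum, Fin.sum_univ_succ, hw0, Nat.add_sub_cancel_left]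
  rw [hball, volume_image_nuTransl hassoc hid hinv htri h0 hline hcont,
    volume_image_mul_diagonal, hdet, abs_of_pos (by positivity),
    ENNReal.ofReal_mul (by positivity), ENNReal.ofReal_toReal hS_fin.ne, mul_comm]

/-- in a Carnot group (triangular polynomial group law on `ℝ^{n+1}`,
homogeneous norm `Nm` with weighted dilations compatible with the group law, the
horizontal direction `e₀` having weight 1), the measure of the backwards
projection of a ball of the homogeneous (semi-)metric `d(g,h) = Nm(g⁻¹h)` is
`ℒ(ν(B(g,r))) = c₁ · r^{Q−1}`, with `Q = Σ w i` the homogeneous dimension. -/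
theorem stmt13 (n : ℕ)
    (mul : (Fin (n+1) → ℝ) → (Fin (n+1) → ℝ) → (Fin (n+1) → ℝ))
    (inv : (Fin (n+1) → ℝ) → (Fin (n+1) → ℝ))
    (hassoc : ∀ x y z, mul (mul x y) z = mul x (mul y z))
    (hid : ∀ x, mul 0 x = x ∧ mul x 0 = x)
    (hinv : ∀ x, mul x (inv x) = 0 ∧ mul (inv x) x = 0)
    (htri : ∀ (i : Fin (n+1)) (x x' y y' : Fin (n+1) → ℝ),
      (∀ j, j < i → x j = y j) → (∀ j, j < i → x' j = y' j) →
      mul x x' i - x i - x' i = mul y y' i - y i - y' i)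
    (h0 : ∀ x y, mul x y 0 = x 0 + y 0)
    (hcont : Continuous fun p : (Fin (n+1) → ℝ) × (Fin (n+1) → ℝ) => mul p.1 p.2)
    (hline : ∀ s t : ℝ,
      mul (fun j => if j = 0 then s else 0) (fun j => if j = 0 then t else 0)
        = fun j => if j = 0 then s + t else 0)
    (w : Fin (n+1) → ℕ) (hw : ∀ i, 1 ≤ w i) (hw0 : w 0 = 1)
    (Nm : (Fin (n+1) → ℝ) → ℝ)
    (hNc : Continuous Nm) (hNnn : ∀ x, 0 ≤ Nm x)
    (hN0 : ∀ x, Nm x = 0 ↔ x = 0)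
    (hNδ : ∀ (l : ℝ) (x : Fin (n+1) → ℝ), 0 < l →
      Nm (fun i => l ^ (w i) * x i) = l * Nm x)
    (hδmul : ∀ (l : ℝ) (x y : Fin (n+1) → ℝ), 0 < l →
      mul (fun i => l ^ (w i) * x i) (fun i => l ^ (w i) * y i)
        = fun i => l ^ (w i) * mul x y i)
    (hcompact : IsCompact {x : Fin (n+1) → ℝ | Nm x ≤ 1}) :
    ∃ c₁ > 0, ∀ (g : Fin (n+1) → ℝ) (r : ℝ), 0 < r →
      volume (nuProj n mul '' {h | Nm (mul (inv g) h) < r})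
        = ENNReal.ofReal (c₁ * r ^ ((∑ i, w i) - 1)) :=
  stmt13_general n mul inv hassoc hid hinv htri h0 hcont hline w hw0 Nm hNc hNδ hδmul hcompact
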